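/- arXiv:1709.05182 — 6 statements merged into one kernel-verified Lean document; each statement's English description precedes it below -/
import Mathlib

section
/- For every finite simple graph G with vertex set {v₁,…,vₙ} there exist a finite set Q ⊆ ℝ and real numbers x₁,…,xₙ such that for all i ≠ j, {vᵢ,vⱼ} is an edge of G if and only if (xᵢ + Q) ∩ (xⱼ + Q) ≠ ∅. -/
/-!
Give every vertex `v` a generator `e v` and every edge `s(a, b)` a generator `t s(a, b)` of a free
abelian group, and let `Q` consist of the points `t s(a, b) + e a` for the darts `(a, b)` of `G`.
For an edge `s(i, j)` the translates by `e i` and `e j` share the point `e i + e j + t s(i, j)`.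
Conversely, comparing the edge generators in `e i + q = e j + q'` forces `q` and `q'` to come from
the two darts of one edge, and comparing the vertex generators then identifies that edge as
`s(i, j)`. A family of reals that is linearly independent over `ℤ` embeds the free abelian group
into `ℝ`, and injective additive maps preserve the realization.
-/

open Finsupp

theorem Real.exists_linearIndependent_int (ι : Type*) [Finite ι] :
    ∃ y : ι → ℝ, LinearIndependent ℤ y := by
  obtain ⟨f, hf⟩ := exists_linearIndependent_of_le_rank (R := ℚ) (M := ℝ) (n := Nat.card ι)
    (Real.rank_rat_real ▸ (Cardinal.nat_lt_continuum _).le)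
  exact ⟨f ∘ Finite.equivFin ι, (hf.comp _ (Finite.equivFin ι).injective).restrict_scalars' ℤ⟩

namespace SimpleGraph

variable {V : Type*}

def IsTranslateRealization {A : Type*} [Add A] (G : SimpleGraph V) (Q : Finset A)
    (x : V → A) : Prop :=
  ∀ i j, i ≠ j → (G.Adj i j ↔ ∃ q ∈ Q, ∃ q' ∈ Q, x i + q = x j + q')

theorem IsTranslateRealization.image {A B F : Type*} [Add A] [Add B] [DecidableEq B]
    [FunLike F A B] [AddHomClass F A B] {G : SimpleGraph V} {Q : Finset A} {x : V → A}
    (h : G.IsTranslateRealization Q x) {φ : F} (hφ : Function.Injective φ) :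
    G.IsTranslateRealization (Q.image φ) (φ ∘ x) := by
  intro i j hij
  simp [h i j hij, ← map_add, hφ.eq_iff]

variable [Fintype V] [DecidableEq V] (G : SimpleGraph V) [DecidableRel G.Adj]

noncomputable def dartPattern : Finset (V ⊕ Sym2 V →₀ ℤ) :=
  Finset.univ.image fun d : G.Dart => single (Sum.inr d.edge) 1 + single (Sum.inl d.fst) 1

theorem isTranslateRealization_dartPattern :
    G.IsTranslateRealization G.dartPattern (fun v => single (Sum.inl v) 1) := by
  intro i j hij
  simp only [dartPattern, Finset.mem_image, Finset.mem_univ, true_and, exists_exists_eq_and]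
  constructor
  · intro hadj
    let d : G.Dart := ⟨(i, j), hadj⟩
    refine ⟨d.symm, d, ?_⟩
    rw [Dart.edge_symm]
    abel
  · rintro ⟨d, d', heq⟩
    have hedge : d.edge = d'.edge := by
      by_contra hne
      simpa [single_apply, hne] using congr($heq (Sum.inr d.edge))
    rw [hedge, add_left_comm, add_left_comm (single (Sum.inl j) 1)] at heq
    obtain ⟨hij', -⟩ | ⟨-, hi, hj⟩ | ⟨htwo, -⟩ :=
      (single_add_single_eq_single_add_single one_ne_zero one_ne_zero).mp (add_left_cancel heq)
    · exact absurd (Sum.inl_injective hij') hij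
    · rcases (dart_edge_eq_iff d d').mp hedge with rfl | rfl
      · exact absurd (Sum.inl_injective (hi.trans hj)) hij
      · have hi : i = d'.fst := Sum.inl_injective hi
        have hj : d'.snd = j := Sum.inl_injective hj
        exact hi ▸ hj ▸ d'.adj
    · norm_num at htwo

end SimpleGraph

/-- Every finite simple graph is the intersection graph of translates of
a finite 1-dimensional point pattern. -/
theorem stmt_3 (n : ℕ) (G : SimpleGraph (Fin n)) :
    ∃ (Q : Finset ℝ) (x : Fin n → ℝ),
      ∀ i j : Fin n, i ≠ j →
        (G.Adj i j ↔ ∃ q ∈ Q, ∃ q' ∈ Q, x i + q = x j + q') := by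
  classical
  obtain ⟨y, hy⟩ := Real.exists_linearIndependent_int (Fin n ⊕ Sym2 (Fin n))
  exact ⟨_, _, G.isTranslateRealization_dartPattern.image (φ := linearCombination ℤ y) hy⟩
end

section
/- Let G be a graph on vertex set {v₁,…,vₙ} with edges e₁,…,eₘ, and set q = 2(n+m). Define Q = {4^{q+k} − 4^{a(k)} : 1 ≤ k ≤ m} ∪ {4^{q+k} − 4^{b(k)} : 1 ≤ k ≤ m}, where edge e_k joins v_{a(k)} and v_{b(k)} with a(k) < b(k), and set xᵢ = 4^i. Then for all i < j, (xᵢ + Q) ∩ (xⱼ + Q) ≠ ∅ if and only if {vᵢ,vⱼ} is an edge of G. -/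
/-!
Moving the subtracted terms across, `4^i + (4^K - 4^c) = 4^j + (4^K' - 4^c')` becomes an
identity `4^i + 4^c' + 4^K = 4^j + 4^c + 4^K'` between sums of three powers of `4`, all
exponents except `K, K' > n` being at most `n`. Since `4 > 2`, such a sum has no carries in
base `4`: its top exponent is its `Nat.log 4`, so `K = K'` (the same edge `e_k`), and the two
remaining powers match up to order. As `i < j` and `a k < b k`, this forces `i = a k`, `j = b k`.
-/

namespace Nat

variable {b : ℕ}

theorem log_add_pow_eq {x K : ℕ} (hx : x < (b - 1) * b ^ K) : Nat.log b (x + b ^ K) = K := by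
  have hb : 1 ≤ b := by
    by_contra! h
    simp [Nat.lt_one_iff.mp h] at hx
  refine Nat.log_eq_of_pow_le_of_lt_pow (Nat.le_add_left _ _) ?_
  calc x + b ^ K < (b - 1) * b ^ K + b ^ K := by omega
    _ = b ^ (K + 1) := by
      rw [pow_succ, mul_comm (b ^ K), ← Nat.succ_mul, Nat.succ_eq_add_one, Nat.sub_add_cancel hb]

theorem eq_and_eq_of_add_pow_eq_add_pow {x y K L : ℕ} (hx : x < (b - 1) * b ^ K)
    (hy : y < (b - 1) * b ^ L) (h : x + b ^ K = y + b ^ L) : K = L ∧ x = y := by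
  have hKL : K = L := by rw [← log_add_pow_eq hx, h, log_add_pow_eq hy]
  subst hKL
  exact ⟨rfl, Nat.add_right_cancel h⟩

theorem pow_add_pow_lt_pred_mul_pow (hb : 2 < b) {p q K : ℕ} (hp : p < K) (hq : q < K) :
    b ^ p + b ^ q < (b - 1) * b ^ K := by
  have hpK : b ^ p < b ^ K := Nat.pow_lt_pow_right (by omega) hp
  have hqK : b ^ q < b ^ K := Nat.pow_lt_pow_right (by omega) hq
  have two_le : 2 * b ^ K ≤ (b - 1) * b ^ K := Nat.mul_le_mul_right _ (by omega)
  omega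

theorem pow_lt_pred_mul_pow (hb : 2 < b) {p q : ℕ} (hpq : p ≤ q) : b ^ p < (b - 1) * b ^ q := by
  have hpq : b ^ p ≤ b ^ q := Nat.pow_le_pow_right (by omega) hpq
  have two_le : 2 * b ^ q ≤ (b - 1) * b ^ q := Nat.mul_le_mul_right _ (by omega)
  have : 0 < b ^ q := Nat.pow_pos (by omega)
  omega

theorem pow_add_pow_eq_pow_add_pow (hb : 2 < b) {p q r s : ℕ}
    (h : b ^ p + b ^ q = b ^ r + b ^ s) : (p = r ∧ q = s) ∨ (p = s ∧ q = r) := by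
  wlog hpq : p ≤ q generalizing p q
  · rw [add_comm] at h
    have := this h (by omega)
    omega
  wlog hrs : r ≤ s generalizing r s
  · rw [add_comm (b ^ r)] at h
    have := this h (by omega)
    omega
  obtain ⟨rfl, hpr⟩ := eq_and_eq_of_add_pow_eq_add_pow (pow_lt_pred_mul_pow hb hpq)
    (pow_lt_pred_mul_pow hb hrs) h
  exact Or.inl ⟨Nat.pow_right_injective (by omega) hpr, rfl⟩

theorem eq_of_pow_add_pow_add_pow_eq (hb : 2 < b) {p q r s K L : ℕ} (hp : p < K) (hq : q < K)
    (hr : r < L) (hs : s < L) (h : b ^ p + b ^ q + b ^ K = b ^ r + b ^ s + b ^ L) :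
    K = L ∧ ((p = r ∧ q = s) ∨ (p = s ∧ q = r)) := by
  obtain ⟨hKL, hlow⟩ := eq_and_eq_of_add_pow_eq_add_pow (pow_add_pow_lt_pred_mul_pow hb hp hq)
    (pow_add_pow_lt_pred_mul_pow hb hr hs) h
  exact ⟨hKL, pow_add_pow_eq_pow_add_pow hb hlow⟩

end Nat

theorem stmt_4_general (n m : ℕ) (a b : Fin m → ℕ)
    (hab : ∀ k, a k < b k) (hb : ∀ k, b k ≤ n) :
    ∀ i j : ℕ, 1 ≤ i → i < j → j ≤ n →
      ((∃ y ∈ {y : ℝ | ∃ k : Fin m,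
            y = (4 : ℝ) ^ (2 * (n + m) + (k : ℕ) + 1) - 4 ^ (a k) ∨
            y = (4 : ℝ) ^ (2 * (n + m) + (k : ℕ) + 1) - 4 ^ (b k)},
        ∃ y' ∈ {y : ℝ | ∃ k : Fin m,
            y = (4 : ℝ) ^ (2 * (n + m) + (k : ℕ) + 1) - 4 ^ (a k) ∨
            y = (4 : ℝ) ^ (2 * (n + m) + (k : ℕ) + 1) - 4 ^ (b k)},
          (4 : ℝ) ^ i + y = (4 : ℝ) ^ j + y')
        ↔ ∃ k : Fin m, a k = i ∧ b k = j) := by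
  intro i j _ hij hjn
  constructor
  · rintro ⟨y, ⟨k, hy⟩, y', ⟨k', hy'⟩, heq⟩
    have key : ∀ c c' : ℕ, (c = a k ∨ c = b k) → (c' = a k' ∨ c' = b k') →
        (4 : ℝ) ^ i + ((4 : ℝ) ^ (2 * (n + m) + (k : ℕ) + 1) - 4 ^ c) =
          (4 : ℝ) ^ j + ((4 : ℝ) ^ (2 * (n + m) + (k' : ℕ) + 1) - 4 ^ c') →
        ∃ k : Fin m, a k = i ∧ b k = j := by
      intro c c' hc hc' hreal
      have hnat : 4 ^ i + 4 ^ c' + 4 ^ (2 * (n + m) + (k : ℕ) + 1) =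
          4 ^ j + 4 ^ c + 4 ^ (2 * (n + m) + (k' : ℕ) + 1) := by
        exact_mod_cast (by linarith : (4 : ℝ) ^ i + 4 ^ c' + 4 ^ (2 * (n + m) + (k : ℕ) + 1) =
          4 ^ j + 4 ^ c + 4 ^ (2 * (n + m) + (k' : ℕ) + 1))
      have := hab k; have := hb k; have := hab k'; have := hb k'
      obtain ⟨hkk', hexp⟩ := Nat.eq_of_pow_add_pow_add_pow_eq (by norm_num) (by omega) (by omega)
        (by omega) (by omega) hnat
      obtain rfl : k = k' := Fin.ext (by omega)
      exact ⟨k, by omega, by omega⟩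
    rcases hy with rfl | rfl <;> rcases hy' with rfl | rfl <;>
      exact key _ _ (by simp) (by simp) heq
  · rintro ⟨k, rfl, rfl⟩
    exact ⟨_, ⟨k, Or.inl rfl⟩, _, ⟨k, Or.inr rfl⟩, by ring⟩

/-- The explicit construction with powers of 4: translates `4^i + Q` and `4^j + Q`
intersect exactly when `{vᵢ, vⱼ}` is an edge of the graph. -/
theorem stmt_4 (n m : ℕ) (a b : Fin m → ℕ)
    (ha : ∀ k, 1 ≤ a k) (hab : ∀ k, a k < b k) (hb : ∀ k, b k ≤ n) :
    ∀ i j : ℕ, 1 ≤ i → i < j → j ≤ n →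
      ((∃ y ∈ {y : ℝ | ∃ k : Fin m,
            y = (4 : ℝ) ^ (2 * (n + m) + (k : ℕ) + 1) - 4 ^ (a k) ∨
            y = (4 : ℝ) ^ (2 * (n + m) + (k : ℕ) + 1) - 4 ^ (b k)},
        ∃ y' ∈ {y : ℝ | ∃ k : Fin m,
            y = (4 : ℝ) ^ (2 * (n + m) + (k : ℕ) + 1) - 4 ^ (a k) ∨
            y = (4 : ℝ) ^ (2 * (n + m) + (k : ℕ) + 1) - 4 ^ (b k)},
          (4 : ℝ) ^ i + y = (4 : ℝ) ^ j + y')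
        ↔ ∃ k : Fin m, a k = i ∧ b k = j) :=
  stmt_4_general n m a b hab hb
end

section
/- In any finite set of closed unit intervals on the real line, there exists a minimum dominating set of the induced intersection graph whose chosen intervals are pairwise disjoint. -/
/-!
Among the minimum dominating sets choose one, `D`, whose left endpoints have the largest sum.
Suppose two members `i ≠ j` of `D` with `x i ≤ x j` are adjacent. By minimality `j` has a
private neighbour `k`; it lies to the right of `j`, since every neighbour of `j` on its left is
also a neighbour of `i`. Replacing `j` by its rightmost neighbour `j'` therefore keeps `D`
dominating, hence minimum, while `x j < x k ≤ x j'` makes the sum grow: a contradiction.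
-/

open Finset

namespace UnitIntervalGraph

variable {ι : Type*}

def Dominates (x : ι → ℝ) (D : Finset ι) : Prop :=
  ∀ i, ∃ j ∈ D, |x i - x j| ≤ 1

def IsMinDominating (x : ι → ℝ) (D : Finset ι) : Prop :=
  Dominates x D ∧ ∀ D', Dominates x D' → #D ≤ #D'

variable {x : ι → ℝ} {D : Finset ι} {i j j' : ι}

theorem IsMinDominating.exists_private_neighbour [DecidableEq ι] (hD : IsMinDominating x D)
    (hj : j ∈ D) : ∃ k, |x k - x j| ≤ 1 ∧ ∀ m ∈ D.erase j, 1 < |x k - x m| := by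
  have hnot : ¬ Dominates x (D.erase j) := fun h =>
    (hD.2 _ h).not_gt (card_erase_lt_of_mem hj)
  simp only [Dominates, not_forall, not_exists, not_and, not_le] at hnot
  obtain ⟨k, hk⟩ := hnot
  obtain ⟨m, hm, hkm⟩ := hD.1 k
  obtain rfl : m = j := by
    by_contra hmj
    exact (hk m (mem_erase.2 ⟨hmj, hm⟩)).not_ge hkm
  exact ⟨k, hkm, hk⟩

theorem Dominates.insert_erase [DecidableEq ι] (hD : Dominates x D) (hi : i ∈ D) (hij : i ≠ j)
    (hle : x i ≤ x j) (hadj : |x i - x j| ≤ 1) (hj' : |x j' - x j| ≤ 1)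
    (hmax : ∀ l, |x l - x j| ≤ 1 → x l ≤ x j') :
    Dominates x (insert j' (D.erase j)) := by
  intro l
  obtain ⟨m, hm, hlm⟩ := hD l
  by_cases hmj : m = j
  · subst hmj
    rw [abs_sub_le_iff] at hadj hj' hlm
    rcases le_or_gt (x l) (x m) with hl | hl
    · refine ⟨i, mem_insert_of_mem (mem_erase.2 ⟨hij, hi⟩), abs_sub_le_iff.2 ⟨?_, ?_⟩⟩ <;>
        linarith
    · have hlj' := hmax l (abs_sub_le_iff.2 hlm)
      exact ⟨j', mem_insert_self _ _, abs_sub_le_iff.2 ⟨by linarith, by linarith⟩⟩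
  · exact ⟨m, mem_insert_of_mem (mem_erase.2 ⟨hmj, hm⟩), hlm⟩

theorem IsMinDominating.insert_erase [DecidableEq ι] (hD : IsMinDominating x D) (hj : j ∈ D)
    (hdom : Dominates x (insert j' (D.erase j))) :
    IsMinDominating x (insert j' (D.erase j)) ∧ j' ∉ D.erase j := by
  have hge := hD.2 _ hdom
  have hj' : j' ∉ D.erase j := by
    intro h
    rw [insert_eq_of_mem h] at hge
    exact hge.not_gt (card_erase_lt_of_mem hj)
  refine ⟨⟨hdom, fun D' hD' => ?_⟩, hj'⟩
  rw [card_insert_of_notMem hj', card_erase_add_one hj]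
  exact hD.2 D' hD'

theorem IsMinDominating.one_lt_abs_sub_of_le [Fintype ι] [DecidableEq ι]
    (hD : IsMinDominating x D)
    (hsum : ∀ D', IsMinDominating x D' → ∑ m ∈ D', x m ≤ ∑ m ∈ D, x m)
    (hi : i ∈ D) (hj : j ∈ D) (hij : i ≠ j) (hle : x i ≤ x j) : 1 < |x i - x j| := by
  by_contra! hadj
  obtain ⟨k, hkj, hk⟩ := hD.exists_private_neighbour hj
  have hjk : x j < x k := by
    by_contra! hkj'
    refine (hk i (mem_erase.2 ⟨hij, hi⟩)).not_ge (abs_sub_le_iff.2 ?_)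
    rw [abs_sub_le_iff] at hkj hadj
    constructor <;> linarith
  obtain ⟨j', hj', hmax⟩ :=
    (univ.filter fun l => |x l - x j| ≤ 1).exists_max_image x ⟨j, by simp⟩
  simp only [mem_filter, mem_univ, true_and] at hj' hmax
  obtain ⟨hD', hj'D⟩ := hD.insert_erase hj (hD.1.insert_erase hi hij hle hadj hj' hmax)
  have hsum' := hsum _ hD'
  rw [sum_insert hj'D] at hsum'
  linarith [sum_erase_add D x hj, hmax k hkj]

theorem exists_isMinDominating_forall_sum_le [Fintype ι] (x : ι → ℝ) :
    ∃ D, IsMinDominating x D ∧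
      ∀ D', IsMinDominating x D' → ∑ m ∈ D', x m ≤ ∑ m ∈ D, x m := by
  classical
  obtain ⟨D₀, hD₀, hmin⟩ := (univ.filter (Dominates x)).exists_min_image card
    ⟨univ, mem_filter.2 ⟨mem_univ _, fun i => ⟨i, mem_univ i, by simp⟩⟩⟩
  simp only [mem_filter, mem_univ, true_and] at hD₀ hmin
  obtain ⟨D, hD, hmax⟩ := (univ.filter (IsMinDominating x)).exists_max_image
    (fun D => ∑ m ∈ D, x m) ⟨D₀, mem_filter.2 ⟨mem_univ _, hD₀, hmin⟩⟩
  simp only [mem_filter, mem_univ, true_and] at hD hmax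
  exact ⟨D, hD, hmax⟩

end UnitIntervalGraph

/-- Every finite family of unit intervals admits a minimum dominating set of its
intersection graph whose intervals are pairwise disjoint. -/
theorem stmt_5 (n : ℕ) (x : Fin n → ℝ) :
    ∃ D : Finset (Fin n),
      (∀ i, ∃ j ∈ D, |x i - x j| ≤ 1) ∧
      (∀ D' : Finset (Fin n), (∀ i, ∃ j ∈ D', |x i - x j| ≤ 1) → D.card ≤ D'.card) ∧
      (∀ i ∈ D, ∀ j ∈ D, i ≠ j → 1 < |x i - x j|) := by
  obtain ⟨D, hD, hsum⟩ := UnitIntervalGraph.exists_isMinDominating_forall_sum_le x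
  refine ⟨D, hD.1, hD.2, fun i hi j hj hij => ?_⟩
  rcases le_total (x i) (x j) with h | h
  · exact hD.one_lt_abs_sub_of_le hsum hi hj hij h
  · rw [abs_sub_comm]
    exact hD.one_lt_abs_sub_of_le hsum hj hi hij.symm h
end

section
/- Let x₁,…,xₙ be reals and consider the unit interval graph of the intervals [xᵢ, xᵢ+1]. Then there exists a minimum dominating set D of this graph such that for every y ∈ ℝ, at most one left endpoint xᵢ with i ∈ D lies in the half-open window [y, y+1). -/
open scoped Classical

/-- Greedy construction: for every set `S` of vertices there is a set `D` that
dominates `S`, has minimum cardinality among sets dominating `S`, whose points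
are pairwise more than 1 apart, and each of whose points is at least the
minimum of `x` over `S`. -/
theorem greedy_aux (n : ℕ) (x : Fin n → ℝ) :
    ∀ (m : ℕ) (S : Finset (Fin n)), S.card ≤ m →
    ∃ D : Finset (Fin n),
      (∀ i ∈ S, ∃ j ∈ D, |x i - x j| ≤ 1) ∧
      (∀ D' : Finset (Fin n), (∀ i ∈ S, ∃ j ∈ D', |x i - x j| ≤ 1) → D.card ≤ D'.card) ∧
      (∀ i ∈ D, ∀ j ∈ D, i ≠ j → 1 < |x i - x j|) ∧
      (∀ j ∈ D, ∃ i ∈ S, x i ≤ x j) := by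
  intro m
  induction m with
  | zero =>
    intro S hS
    have hSe : S = ∅ := Finset.card_eq_zero.mp (Nat.le_zero.mp hS)
    subst hSe
    exact ⟨∅, by simp, fun D' _ => by simp, by simp, by simp⟩
  | succ m ih =>
    intro S hS
    rcases S.eq_empty_or_nonempty with rfl | hne
    · exact ⟨∅, by simp, fun D' _ => by simp, by simp, by simp⟩
    obtain ⟨p, hpS, hpmin⟩ := S.exists_min_image x hne
    set T := Finset.univ.filter (fun j => |x j - x p| ≤ 1) with hT
    have hpT : p ∈ T := by simp [hT]
    obtain ⟨c, hcT, hcmax⟩ := T.exists_max_image x ⟨p, hpT⟩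
    have hcle : |x c - x p| ≤ 1 := by
      rw [hT, Finset.mem_filter] at hcT; exact hcT.2
    have hpc : x p ≤ x c := hcmax p hpT
    set S' := S.filter (fun i => 1 < |x i - x c|) with hS'
    have hS'sub : S' ⊆ S := Finset.filter_subset _ _
    have hqfar : ∀ q ∈ S', x c + 1 < x q := by
      intro q hq
      rw [hS', Finset.mem_filter] at hq
      obtain ⟨hqS, habs⟩ := hq
      have h1 : x p ≤ x q := hpmin q hqS
      have h2 := abs_le.mp hcle
      rcases lt_abs.mp habs with h | h
      · linarith
      · exfalso; linarith [h2.1, h2.2]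
    have hpnot : p ∉ S' := by
      rw [hS', Finset.mem_filter]
      intro h
      have := hqfar p (by rw [hS', Finset.mem_filter]; exact h)
      linarith
    have hcard : S'.card ≤ m := by
      have hlt : S'.card < S.card := Finset.card_lt_card ⟨hS'sub, fun h => hpnot (h hpS)⟩
      omega
    obtain ⟨Dr, hdomr, hminr, hpairr, hinvr⟩ := ih S' hcard
    have hcDr : c ∉ Dr := by
      intro hc
      obtain ⟨i, hiS', hix⟩ := hinvr c hc
      have := hqfar i hiS'
      linarith
    refine ⟨insert c Dr, ?_, ?_, ?_, ?_⟩
    · -- domination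
      intro i hiS
      by_cases h : |x i - x c| ≤ 1
      · exact ⟨c, Finset.mem_insert_self _ _, h⟩
      · have hiS' : i ∈ S' := by
          rw [hS', Finset.mem_filter]; exact ⟨hiS, lt_of_not_ge h⟩
        obtain ⟨j, hjDr, hj⟩ := hdomr i hiS'
        exact ⟨j, Finset.mem_insert_of_mem hjDr, hj⟩
    · -- minimality
      intro D' hD'
      obtain ⟨j', hj'D', hj'p⟩ := hD' p hpS
      have hdom' : ∀ q ∈ S', ∃ j ∈ D'.erase j', |x q - x j| ≤ 1 := by
        intro q hq
        obtain ⟨j, hjD', hjq⟩ := hD' q (hS'sub hq)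
        refine ⟨j, Finset.mem_erase.mpr ⟨?_, hjD'⟩, hjq⟩
        intro hjj'
        subst hjj'
        have h1 : x c + 1 < x q := hqfar q hq
        have h2 := abs_le.mp hjq
        have hjT : j ∈ T := by
          rw [hT, Finset.mem_filter]
          refine ⟨Finset.mem_univ _, ?_⟩
          rw [abs_sub_comm]; exact hj'p
        have := hcmax j hjT
        linarith [h2.1, h2.2]
      have h1 := hminr (D'.erase j') hdom'
      have h2 : (D'.erase j').card = D'.card - 1 := Finset.card_erase_of_mem hj'D'
      have h3 : 1 ≤ D'.card := Finset.card_pos.mpr ⟨j', hj'D'⟩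
      have h4 : (insert c Dr).card = Dr.card + 1 := Finset.card_insert_of_notMem hcDr
      omega
    · -- pairwise spacing
      intro i hi j hj hij
      rcases Finset.mem_insert.mp hi with rfl | hi'
      · rcases Finset.mem_insert.mp hj with rfl | hj'
        · exact absurd rfl hij
        · obtain ⟨q, hqS', hqj⟩ := hinvr j hj'
          have := hqfar q hqS'
          rw [abs_sub_comm]
          exact lt_abs.mpr (Or.inl (by linarith))
      · rcases Finset.mem_insert.mp hj with rfl | hj'
        · obtain ⟨q, hqS', hqi⟩ := hinvr i hi'
          have := hqfar q hqS'
          exact lt_abs.mpr (Or.inl (by linarith))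
        · exact hpairr i hi' j hj' hij
    · -- lower bound invariant
      intro j hj
      rcases Finset.mem_insert.mp hj with rfl | hj'
      · exact ⟨p, hpS, hpc⟩
      · obtain ⟨i, hiS', hix⟩ := hinvr j hj'
        exact ⟨i, hS'sub hiS', hix⟩

/-- There is a minimum dominating set of a unit interval graph with at most one
left endpoint in every half-open window of width 1. -/
theorem stmt_6 (n : ℕ) (x : Fin n → ℝ) :
    ∃ D : Finset (Fin n),
      (∀ i, ∃ j ∈ D, |x i - x j| ≤ 1) ∧
      (∀ D' : Finset (Fin n), (∀ i, ∃ j ∈ D', |x i - x j| ≤ 1) → D.card ≤ D'.card) ∧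
      (∀ y : ℝ, (D.filter fun i => x i ∈ Set.Ico y (y + 1)).card ≤ 1) := by
  obtain ⟨D, hdom, hmin, hpair, _⟩ :=
    greedy_aux n x (Finset.univ.card) Finset.univ le_rfl
  refine ⟨D, fun i => hdom i (Finset.mem_univ i), fun D' hD' => hmin D' (fun i _ => hD' i), ?_⟩
  intro y
  refine Finset.card_le_one.mpr ?_
  intro a ha b hb
  rw [Finset.mem_filter] at ha hb
  obtain ⟨haD, hay⟩ := ha
  obtain ⟨hbD, hby⟩ := hb
  by_contra hab
  have h1 := hpair a haD b hbD hab
  obtain ⟨ha1, ha2⟩ := Set.mem_Ico.mp hay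
  obtain ⟨hb1, hb2⟩ := Set.mem_Ico.mp hby
  have : |x a - x b| < 1 := abs_lt.mpr ⟨by linarith, by linarith⟩
  linarith
end

section
/- Let G = (C ∪ I, E) be a split graph. Construct: a regular 2|I|-gon Q' with inscribed regular |I|-gon Q formed by alternate vertices; for each v ∈ I, a set T(v) which is one of the |I| connected components (triangles) of Q' \ Q, with small disjoint triangles placed inside them; for each u ∈ C, the set P(u) = Q ∪ ⋃{T(v) : v ∈ N_I(u)}. Then every P(u) for u ∈ C is convex. -/
/-!
With `α = π / m`, the union equals the polygon cut out by the `2m` half-planes bounding `Q'`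
together with the half-planes `dot x (circ ((2k+1)α)) ≤ cos α` bounding `Q` along the edges `k`
whose triangle is not chosen; an intersection of half-planes is convex. Every vertex of every
piece satisfies these inequalities. Conversely, a point of the cut polygon that violates the
inequality of some edge `k` of `Q` has `k` chosen and lies in the triangle over that edge, while a
point satisfying all edge inequalities of `Q` lies in the triangle spanned by the centre and the
edge of its angular sector, hence in `Q`.
-/

open Real

namespace RegularPolygonCaps

def dot (p q : ℝ × ℝ) : ℝ := p.1 * q.1 + p.2 * q.2

def cross (p q : ℝ × ℝ) : ℝ := p.1 * q.2 - p.2 * q.1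

noncomputable def circ (θ : ℝ) : ℝ × ℝ := (cos θ, sin θ)

lemma dot_circ_circ (s t : ℝ) : dot (circ s) (circ t) = cos (t - s) := by
  simp only [dot, circ, cos_sub]; ring

lemma cross_circ_circ (s t : ℝ) : cross (circ s) (circ t) = sin (t - s) := by
  simp only [cross, circ, sin_sub]; ring

lemma cross_smul_right (p q : ℝ × ℝ) (r : ℝ) : cross p (r • q) = r * cross p q := by
  simp only [cross, Prod.smul_fst, Prod.smul_snd, smul_eq_mul]; ring

lemma cross_anticomm (p q : ℝ × ℝ) : -cross p q = cross q p := by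
  simp only [cross]; ring

/-- The chord from `circ (μ - δ)` to `circ (μ + δ)` lies on the line `dot x (circ μ) = cos δ`. -/
lemma cross_chord (μ δ : ℝ) (x : ℝ × ℝ) :
    cross (circ (μ + δ) - circ (μ - δ)) (x - circ (μ - δ)) =
      2 * sin δ * (cos δ - dot x (circ μ)) := by
  simp only [cross, dot, circ, Prod.fst_sub, Prod.snd_sub, cos_add, sin_add, cos_sub, sin_sub]
  linear_combination (2 * sin δ * cos δ) * sin_sq_add_cos_sq μ

lemma convex_setOf_dot_le (u : ℝ × ℝ) (c : ℝ) : Convex ℝ {x | dot x u ≤ c} :=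
  convex_halfSpace_le ⟨fun x y => by simp only [dot, Prod.fst_add, Prod.snd_add]; ring,
    fun r x => by simp only [dot, Prod.smul_fst, Prod.smul_snd, smul_eq_mul]; ring⟩ c

/-- The three cross products are the barycentric coordinates of `x`, scaled by
`cross (b - a) (c - a)`. -/
lemma mem_convexHull_triple_of_cross_nonneg {a b c x : ℝ × ℝ}
    (habc : 0 < cross (b - a) (c - a)) (hab : 0 ≤ cross (b - a) (x - a))
    (hbc : 0 ≤ cross (c - b) (x - b)) (hca : 0 ≤ cross (a - c) (x - c)) :
    x ∈ convexHull ℝ {a, b, c} := by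
  have hsum : cross (c - b) (x - b) + cross (a - c) (x - c) + cross (b - a) (x - a) =
      cross (b - a) (c - a) := by
    simp only [cross, Prod.fst_sub, Prod.snd_sub]; ring
  have hcomb : cross (c - b) (x - b) • a + cross (a - c) (x - c) • b + cross (b - a) (x - a) • c
      = cross (b - a) (c - a) • x := by
    ext <;> simp only [cross, Prod.fst_sub, Prod.snd_sub, Prod.fst_add, Prod.snd_add,
      Prod.smul_fst, Prod.smul_snd, smul_eq_mul] <;> ring
  have hmem := Finset.centerMass_mem_convexHull (s := ({a, b, c} : Set (ℝ × ℝ)))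
    (Finset.univ : Finset (Fin 3))
    (w := ![cross (c - b) (x - b), cross (a - c) (x - c), cross (b - a) (x - a)])
    (z := ![a, b, c]) (by intro i _; fin_cases i <;> assumption)
    (by simpa [Fin.sum_univ_three, hsum] using habc) (by intro i _; fin_cases i <;> simp)
  simp only [Finset.centerMass, Fin.sum_univ_three, Matrix.cons_val_zero, Matrix.cons_val_one,
    Matrix.cons_val_two, Matrix.tail_cons, Matrix.head_cons, hsum, hcomb] at hmem
  rwa [inv_smul_smul₀ habc.ne'] at hmem

lemma circ_periodic : Function.Periodic circ (2 * π) := fun θ => by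
  simp only [circ, cos_add_two_pi, sin_add_two_pi]

lemma circ_eq_equivRealProd (θ : ℝ) :
    circ θ = Complex.equivRealProdLm (Complex.exp (θ * Complex.I)) := by
  rw [Complex.equivRealProdLm_apply, Complex.exp_ofReal_mul_I_re, Complex.exp_ofReal_mul_I_im,
    circ]

lemma exists_eq_smul_circ (x : ℝ × ℝ) :
    ∃ r : ℝ, 0 ≤ r ∧ ∃ φ ∈ Set.Ico 0 (2 * π), x = r • circ φ := by
  set z := Complex.equivRealProdLm.symm x
  refine ⟨‖z‖, norm_nonneg z, toIcoMod two_pi_pos 0 z.arg,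
    by simpa using toIcoMod_mem_Ico two_pi_pos 0 z.arg, ?_⟩
  have hz : x = Complex.equivRealProdLm ((‖z‖ : ℂ) * Complex.exp (z.arg * Complex.I)) := by
    rw [Complex.norm_mul_exp_arg_mul_I, LinearEquiv.apply_symm_apply]
  rw [hz, ← Complex.real_smul, map_smul, ← circ_eq_equivRealProd, toIcoMod,
    circ_periodic.sub_zsmul_eq]

lemma cos_le_cos_of_le_abs {a θ : ℝ} (ha : 0 ≤ a) (h₁ : a ≤ |θ|) (h₂ : |θ| ≤ 2 * π - a) :
    cos θ ≤ cos a := by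
  rw [← cos_abs]
  rcases le_total |θ| π with h | h
  · exact cos_le_cos_of_nonneg_of_le_pi ha h h₁
  · rw [← cos_two_pi_sub]
    exact cos_le_cos_of_nonneg_of_le_pi ha (by linarith) (by linarith)

lemma cos_two_pi_mul_sub_div_le {N p q : ℕ} (hp₀ : 0 < p) (hp : p < N) (hq : q ≤ N)
    (hpq : p ≠ q) : cos (2 * π * (p - q) / N) ≤ cos (2 * π / N) := by
  have hN : (0 : ℝ) < N := by exact_mod_cast hp₀.trans hp
  have hd₁ : (1 : ℤ) ≤ |(p : ℤ) - q| := by rw [le_abs']; omega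
  have hd₂ : |(p : ℤ) - q| ≤ N - 1 := by rw [abs_le]; omega
  have hd₁' : (1 : ℝ) ≤ |(p : ℝ) - q| := by exact_mod_cast hd₁
  have hd₂' : |(p : ℝ) - q| ≤ N - 1 := by exact_mod_cast hd₂
  have habs : |2 * π * (p - q) / N| = 2 * π * |(p : ℝ) - q| / N := by
    rw [abs_div, abs_mul, abs_of_pos two_pi_pos, abs_of_pos hN]
  apply cos_le_cos_of_le_abs (by positivity) <;> rw [habs]
  · exact div_le_div_of_nonneg_right (le_mul_of_one_le_right two_pi_pos.le hd₁') hN.le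
  · rw [div_le_iff₀ hN, sub_mul, div_mul_cancel₀ _ hN.ne']
    nlinarith [pi_pos]

lemma mem_convexHull_circ_triple {μ δ : ℝ} (hδ : 0 < δ) (hδπ : δ < π) {x : ℝ × ℝ}
    (hmid : cos δ ≤ dot x (circ μ)) (hl : dot x (circ (μ - δ / 2)) ≤ cos (δ / 2))
    (hr : dot x (circ (μ + δ / 2)) ≤ cos (δ / 2)) :
    x ∈ convexHull ℝ {circ (μ - δ), circ μ, circ (μ + δ)} := by
  have hsin : 0 < sin δ := sin_pos_of_pos_of_lt_pi hδ hδπ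
  have hsin2 : 0 < sin (δ / 2) := sin_pos_of_pos_of_lt_pi (by linarith) (by linarith)
  have hcos : cos δ < 1 := by
    simpa using cos_lt_cos_of_nonneg_of_le_pi le_rfl hδπ.le hδ
  apply mem_convexHull_triple_of_cross_nonneg
  · have h := cross_chord μ δ (circ μ)
    rw [dot_circ_circ, sub_self, cos_zero] at h
    rw [← cross_anticomm, h]
    nlinarith
  · have h := cross_chord (μ - δ / 2) (δ / 2) x
    rw [show μ - δ / 2 + δ / 2 = μ by ring, show μ - δ / 2 - δ / 2 = μ - δ by ring] at h
    rw [h]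
    nlinarith
  · have h := cross_chord (μ + δ / 2) (δ / 2) x
    rw [show μ + δ / 2 + δ / 2 = μ + δ by ring, show μ + δ / 2 - δ / 2 = μ by ring] at h
    rw [h]
    nlinarith
  · have h := cross_chord μ (-δ) x
    rw [← sub_eq_add_neg, sub_neg_eq_add, sin_neg, cos_neg] at h
    rw [h]
    nlinarith

lemma smul_circ_mem_convexHull_sector {μ δ φ r : ℝ} (hδ : 0 < δ) (hδπ : δ < π / 2) (hr : 0 ≤ r)
    (hφ : |φ - μ| ≤ δ) (hx : dot (r • circ φ) (circ μ) ≤ cos δ) :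
    r • circ φ ∈ convexHull ℝ {0, circ (μ - δ), circ (μ + δ)} := by
  obtain ⟨hφ₁, hφ₂⟩ := abs_le.mp hφ
  apply mem_convexHull_triple_of_cross_nonneg
  · rw [sub_zero, sub_zero, cross_circ_circ, show μ + δ - (μ - δ) = 2 * δ by ring]
    exact sin_pos_of_pos_of_lt_pi (by linarith) (by linarith)
  · rw [sub_zero, sub_zero, cross_smul_right, cross_circ_circ]
    exact mul_nonneg hr (sin_nonneg_of_nonneg_of_le_pi (by linarith) (by linarith))
  · rw [cross_chord]
    exact mul_nonneg (mul_nonneg zero_le_two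
      (sin_nonneg_of_nonneg_of_le_pi hδ.le (by linarith))) (by linarith)
  · have h : cross (0 - circ (μ + δ)) (r • circ φ - circ (μ + δ)) = r * sin (μ + δ - φ) := by
      simp only [cross, circ, Prod.fst_sub, Prod.snd_sub, Prod.fst_zero, Prod.snd_zero,
        Prod.smul_fst, Prod.smul_snd, smul_eq_mul, sin_sub]
      ring
    rw [h]
    exact mul_nonneg hr (sin_nonneg_of_nonneg_of_le_pi (by linarith) (by linarith))

def regularPolygonVertices (m : ℕ) : Set (ℝ × ℝ) :=
  {p | ∃ i < m, p = circ (π * (2 * i) / m)}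

lemma sum_regularPolygonVertices_eq_zero {m : ℕ} (hm : 1 < m) :
    ∑ i ∈ Finset.range m, circ (π * (2 * i) / m) = 0 := by
  have hζ := Complex.isPrimitiveRoot_exp m (by omega)
  simp_rw [circ_eq_equivRealProd, ← map_sum]
  convert map_zero Complex.equivRealProdLm
  rw [← hζ.geom_sum_eq_zero hm]
  refine Finset.sum_congr rfl fun i _ => ?_
  rw [← Complex.exp_nat_mul]
  push_cast
  ring_nf

lemma zero_mem_convexHull_regularPolygonVertices {m : ℕ} (hm : 1 < m) :
    (0 : ℝ × ℝ) ∈ convexHull ℝ (regularPolygonVertices m) := by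
  have h := Finset.centerMass_mem_convexHull (s := regularPolygonVertices m) (Finset.range m)
    (w := fun _ => (1 : ℝ)) (z := fun i => circ (π * (2 * i) / m)) (fun _ _ => zero_le_one)
    (by simp; omega) (fun i hi => ⟨i, Finset.mem_range.mp hi, rfl⟩)
  simpa [Finset.centerMass, sum_regularPolygonVertices_eq_zero hm] using h

lemma circ_mem_regularPolygonVertices_succ {m i : ℕ} (hi : i < m) :
    circ (π * (2 * i + 2) / m) ∈ regularPolygonVertices m := by
  rcases Nat.lt_or_ge (i + 1) m with h | h
  · exact ⟨i + 1, h, by push_cast; ring_nf⟩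
  · have hm : (m : ℝ) = i + 1 := by exact_mod_cast (by omega : m = i + 1)
    refine ⟨0, hi.trans_le' (Nat.zero_le _), ?_⟩
    rw [hm, show π * (2 * i + 2) / (i + 1) = 0 + 2 * π by field_simp; ring, circ_periodic]
    simp

lemma mem_convexHull_regularPolygonVertices {m : ℕ} (hm : 3 ≤ m) {x : ℝ × ℝ}
    (hx : ∀ k < m, dot x (circ (π * (2 * k + 1) / m)) ≤ cos (π / m)) :
    x ∈ convexHull ℝ (regularPolygonVertices m) := by
  have hm₀ : (0 : ℝ) < m := by positivity
  have hm₃ : (3 : ℝ) ≤ m := by exact_mod_cast hm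
  obtain ⟨r, hr, φ, ⟨hφ₀, hφ₂π⟩, rfl⟩ := exists_eq_smul_circ x
  set j := ⌊φ * m / (2 * π)⌋₊
  have hj₁ : 2 * π * j ≤ φ * m := by
    have := Nat.floor_le (a := φ * m / (2 * π)) (by positivity)
    rw [le_div_iff₀ two_pi_pos] at this
    linarith
  have hj₂ : φ * m < 2 * π * (j + 1) := by
    have := Nat.lt_floor_add_one (φ * m / (2 * π))
    rw [div_lt_iff₀ two_pi_pos] at this
    linarith
  have hjm : j < m := by
    have : (j : ℝ) < m := by nlinarith [pi_pos]
    exact_mod_cast this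
  have hsector := smul_circ_mem_convexHull_sector (μ := π * (2 * j + 1) / m) (δ := π / m)
    (by positivity) (by rw [div_lt_div_iff₀ hm₀ two_pos]; nlinarith [pi_pos]) hr
    (by
      rw [abs_le, ← sub_nonneg, ← sub_nonneg (b := φ - _)]
      constructor <;> field_simp <;> nlinarith [pi_pos])
    (hx j hjm)
  rw [show π * (2 * j + 1) / m - π / m = π * (2 * j) / m by ring,
    show π * (2 * j + 1) / m + π / m = π * (2 * j + 2) / m by ring] at hsector
  refine convexHull_min ?_ (convex_convexHull ℝ _) hsector
  rintro _ (rfl | rfl | rfl)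
  · exact zero_mem_convexHull_regularPolygonVertices (by omega)
  · exact subset_convexHull ℝ _ ⟨j, hjm, rfl⟩
  · exact subset_convexHull ℝ _ (circ_mem_regularPolygonVertices_succ hjm)

def capTriangle (m i : ℕ) : Set (ℝ × ℝ) :=
  {circ (π * (2 * i) / m), circ (π * (2 * i + 1) / m), circ (π * (2 * i + 2) / m)}

/-- `Q'` cut along the edges of `Q` whose cap triangle is not indexed by `A`. -/
def cutPolygon (m : ℕ) (A : Finset ℕ) : Set (ℝ × ℝ) :=
  (⋂ c ∈ Finset.range (2 * m), {x | dot x (circ (π * (c + 1 / 2) / m)) ≤ cos (π / (2 * m))}) ∩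
    ⋂ k ∈ Finset.range m \ A, {x | dot x (circ (π * (2 * k + 1) / m)) ≤ cos (π / m)}

lemma mem_cutPolygon {m : ℕ} {A : Finset ℕ} {x : ℝ × ℝ} :
    x ∈ cutPolygon m A ↔
      (∀ c < 2 * m, dot x (circ (π * (c + 1 / 2) / m)) ≤ cos (π / (2 * m))) ∧
        ∀ k < m, k ∉ A → dot x (circ (π * (2 * k + 1) / m)) ≤ cos (π / m) := by
  simp [cutPolygon, and_imp]

lemma convex_cutPolygon (m : ℕ) (A : Finset ℕ) : Convex ℝ (cutPolygon m A) :=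
  (convex_iInter₂ fun _ _ => convex_setOf_dot_le _ _).inter
    (convex_iInter₂ fun _ _ => convex_setOf_dot_le _ _)

lemma circ_mem_cutPolygon {m : ℕ} (hm : 0 < m) {A : Finset ℕ} {n : ℕ} (hn : n ≤ 2 * m)
    (hnA : ∀ k < m, k ∉ A → n ≠ 2 * k + 1) : circ (π * n / m) ∈ cutPolygon m A := by
  refine mem_cutPolygon.mpr ⟨fun c hc => ?_, fun k hk hkA => ?_⟩
  · have h := cos_two_pi_mul_sub_div_le (N := 4 * m) (p := 2 * c + 1) (q := 2 * n) (by omega)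
      (by omega) (by omega) (by omega)
    rw [dot_circ_circ]
    convert h using 2 <;> push_cast <;> field_simp <;> ring
  · have h := cos_two_pi_mul_sub_div_le (N := 2 * m) (p := 2 * k + 1) (q := n) (by omega)
      (by omega) hn (hnA k hk hkA).symm
    rw [dot_circ_circ]
    convert h using 2 <;> push_cast <;> field_simp

lemma convexHull_union_subset_cutPolygon {m : ℕ} (hm : 0 < m) {A : Finset ℕ}
    (hA : ∀ i ∈ A, i < m) :
    convexHull ℝ (regularPolygonVertices m) ∪ ⋃ i ∈ A, convexHull ℝ (capTriangle m i) ⊆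
      cutPolygon m A := by
  have hvert : ∀ n ≤ 2 * m, (∀ k < m, k ∉ A → n ≠ 2 * k + 1) →
      ∀ t : ℝ, t = n → circ (π * t / m) ∈ cutPolygon m A := by
    rintro n hn hnA _ rfl
    exact circ_mem_cutPolygon hm hn hnA
  refine Set.union_subset (convexHull_min ?_ (convex_cutPolygon m A))
    (Set.iUnion₂_subset fun i hi => convexHull_min ?_ (convex_cutPolygon m A))
  · rintro _ ⟨i, hi, rfl⟩
    exact hvert (2 * i) (by omega) (fun k _ _ => by omega) _ (by push_cast; ring)
  · have him := hA i hi
    rintro _ (rfl | rfl | rfl)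
    · exact hvert (2 * i) (by omega) (fun k _ _ => by omega) _ (by push_cast; ring)
    · exact hvert (2 * i + 1) (by omega) (fun k _ hk h => hk (by rwa [show k = i by omega])) _
        (by push_cast; ring)
    · exact hvert (2 * i + 2) (by omega) (fun k _ _ => by omega) _ (by push_cast; ring)

lemma cutPolygon_subset_convexHull_union {m : ℕ} (hm : 3 ≤ m) (A : Finset ℕ) :
    cutPolygon m A ⊆
      convexHull ℝ (regularPolygonVertices m) ∪ ⋃ i ∈ A, convexHull ℝ (capTriangle m i) := by
  intro x hx
  obtain ⟨hQ', hQ⟩ := mem_cutPolygon.mp hx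
  by_cases hin : ∀ k < m, dot x (circ (π * (2 * k + 1) / m)) ≤ cos (π / m)
  · exact Or.inl (mem_convexHull_regularPolygonVertices hm hin)
  push Not at hin
  obtain ⟨k, hk, hout⟩ := hin
  have hkA : k ∈ A := by
    by_contra hkA
    exact (hQ k hk hkA).not_gt hout
  have hcap := mem_convexHull_circ_triple (μ := π * (2 * k + 1) / m) (δ := π / m) (x := x)
    (by positivity) (div_lt_self pi_pos (by norm_cast; omega)) hout.le
    (by
      have h := hQ' (2 * k) (by omega)
      push_cast at h
      rwa [show π * (2 * k + 1) / m - π / m / 2 = π * (2 * k + 1 / 2) / m by ring,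
        show π / m / 2 = π / (2 * m) by ring])
    (by
      have h := hQ' (2 * k + 1) (by omega)
      push_cast at h
      rwa [show π * (2 * k + 1) / m + π / m / 2 = π * (2 * k + 1 + 1 / 2) / m by ring,
        show π / m / 2 = π / (2 * m) by ring])
  rw [show π * (2 * k + 1) / m - π / m = π * (2 * k) / m by ring,
    show π * (2 * k + 1) / m + π / m = π * (2 * k + 2) / m by ring] at hcap
  exact Or.inr (Set.mem_biUnion hkA hcap)

end RegularPolygonCaps

open RegularPolygonCaps in
/-- The union of the regular `m`-gon `Q` (on every second vertex of a regular
`2m`-gon `Q'`) with any subset of the corner triangles of `Q' \ Q` is convex. -/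
theorem stmt_11 (m : ℕ) (hm : 3 ≤ m) (A : Finset ℕ) (hA : ∀ i ∈ A, i < m) :
    Convex ℝ
      ((convexHull ℝ {p : ℝ × ℝ | ∃ i < m,
          p = (Real.cos (π * (2 * i) / m), Real.sin (π * (2 * i) / m))}) ∪
       ⋃ i ∈ A, convexHull ℝ
         ({(Real.cos (π * (2 * i) / m), Real.sin (π * (2 * i) / m)),
           (Real.cos (π * (2 * i + 1) / m), Real.sin (π * (2 * i + 1) / m)),
           (Real.cos (π * (2 * i + 2) / m), Real.sin (π * (2 * i + 2) / m))} : Set (ℝ × ℝ))) := by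
  change Convex ℝ
    (convexHull ℝ (regularPolygonVertices m) ∪ ⋃ i ∈ A, convexHull ℝ (capTriangle m i))
  rw [(convexHull_union_subset_cutPolygon (by omega) hA).antisymm
    (cutPolygon_subset_convexHull_union hm A)]
  exact convex_cutPolygon m A
end

section
/- Let D be a minimum dominating set of the intersection graph of n unit intervals [xᵢ, xᵢ+1], and let X(D) be the multiset of left endpoints of the intervals in D. Then for every real y, |X(D) ∩ [y, y+1]| ≤ 3. -/
/-!
If a dominating set `D` had three or more points in a window of width `1`, then replacing
them by the leftmost and the rightmost of them would still dominate: any point within `1`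
of a point between those two is within `1` of one of them. The new set is smaller, so a
minimum dominating set has in fact at most two points in any such window.
-/

open scoped Classical

open Finset

def DominatesWithin {ι : Type*} (r : ℝ) (x : ι → ℝ) (D : Finset ι) : Prop :=
  ∀ i, ∃ j ∈ D, |x i - x j| ≤ r

lemma abs_sub_le_or_abs_sub_le_of_mem_Icc {a b t u r : ℝ} (ht : t ∈ Set.Icc a b)
    (hab : b - a ≤ r) (hu : |u - t| ≤ r) : |u - a| ≤ r ∨ |u - b| ≤ r := by
  obtain ⟨hat, htb⟩ := ht
  rw [abs_le] at hu
  by_cases hua : u ≤ a + r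
  · exact Or.inl (abs_le.mpr ⟨by linarith, by linarith⟩)
  · exact Or.inr (abs_le.mpr ⟨by linarith, by linarith⟩)

namespace DominatesWithin

variable {ι : Type*} {r : ℝ} {x : ι → ℝ} {D : Finset ι}

lemma sdiff_union_pair (hD : DominatesWithin r x D) {S : Finset ι} {a b : ι}
    (hS : ∀ j ∈ S, x j ∈ Set.Icc (x a) (x b)) (hab : x b - x a ≤ r) :
    DominatesWithin r x (D \ S ∪ {a, b}) := by
  intro i
  obtain ⟨j, hjD, hij⟩ := hD i
  by_cases hjS : j ∈ S
  · rcases abs_sub_le_or_abs_sub_le_of_mem_Icc (hS j hjS) hab hij with hia | hib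
    · exact ⟨a, by simp, hia⟩
    · exact ⟨b, by simp, hib⟩
  · exact ⟨j, mem_union_left _ (mem_sdiff.mpr ⟨hjD, hjS⟩), hij⟩

lemma card_filter_Icc_le_two (hD : DominatesWithin r x D)
    (hmin : ∀ D' : Finset ι, DominatesWithin r x D' → #D ≤ #D') (y : ℝ) :
    #(D.filter fun i => x i ∈ Set.Icc y (y + r)) ≤ 2 := by
  set S := D.filter fun i => x i ∈ Set.Icc y (y + r)
  by_contra! hS
  obtain ⟨a, haS, ha⟩ := S.exists_min_image x (card_pos.mp (by omega))
  obtain ⟨b, hbS, hb⟩ := S.exists_max_image x ⟨a, haS⟩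
  have hxa := (mem_filter.mp haS).2
  have hxb := (mem_filter.mp hbS).2
  have hdom' : DominatesWithin r x (D \ S ∪ {a, b}) :=
    hD.sdiff_union_pair (fun j hj => ⟨ha j hj, hb j hj⟩) (by linarith [hxa.1, hxb.2])
  have hcard : #(D \ S ∪ {a, b}) < #D := calc
    #(D \ S ∪ {a, b}) ≤ #(D \ S) + #({a, b} : Finset ι) := card_union_le _ _
    _ ≤ #D - #S + 2 := by
      rw [card_sdiff_of_subset (filter_subset _ _)]
      exact Nat.add_le_add_left card_le_two _
    _ < #D := by have : #S ≤ #D := card_le_card (filter_subset _ _); omega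
  exact (hmin _ hdom').not_gt hcard

end DominatesWithin

/-- Any minimum dominating set of a unit interval graph has at most 3 left
endpoints in any window of width 1. -/
theorem stmt_17 (n : ℕ) (x : Fin n → ℝ) (D : Finset (Fin n))
    (hdom : ∀ i, ∃ j ∈ D, |x i - x j| ≤ 1)
    (hmin : ∀ D' : Finset (Fin n), (∀ i, ∃ j ∈ D', |x i - x j| ≤ 1) → D.card ≤ D'.card) :
    ∀ y : ℝ, (D.filter fun i => x i ∈ Set.Icc y (y + 1)).card ≤ 3 := fun y =>
  (DominatesWithin.card_filter_Icc_le_two hdom hmin y).trans (by norm_num)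
end
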